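/- Maximal elements below points are compatible with joins: if B ⊆ T is join-closed and every element t of T has a greatest element m(t) of B below it, then for all s, t ∈ T, m(s) ⊔ m(t) = m(s ⊔ t). -/
import Mathlib


/-- The greatest-element-of-`B`-below map is compatible with joins:
`m (s ⊔ t) = m s ⊔ m t`. -/
theorem max_below_compatible_with_joins {T : Type*} [PartialOrder T] [Finite T] [OrderTop T]
    (hchain : ∀ x : T, IsChain (· ≤ ·) {y : T | x ≤ y})
    (j : T → T → T) (hj : ∀ a b : T, IsLUB {a, b} (j a b))
    (B : Set T) (hB : ∀ a ∈ B, ∀ b ∈ B, j a b ∈ B)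
    (m : T → T) (hm : ∀ t : T, m t ∈ B ∧ m t ≤ t ∧ ∀ b ∈ B, b ≤ t → b ≤ m t)
    (s t : T) :
    m (j s t) = j (m s) (m t) := by
  have jub : ∀ a b c : T, a ≤ c → b ≤ c → j a b ≤ c := fun a b c ha hb =>
    (hj a b).2 (by rintro x (rfl | rfl) <;> assumption)
  have jl : ∀ a b : T, a ≤ j a b := fun a b => (hj a b).1 (Set.mem_insert _ _)
  have jr : ∀ a b : T, b ≤ j a b := fun a b => (hj a b).1 (Set.mem_insert_of_mem _ rfl)
  have comp : ∀ x u v : T, x ≤ u → x ≤ v → u ≤ v ∨ v ≤ u := by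
    intro x u v hu hv
    rcases eq_or_ne u v with h | h
    · exact Or.inl h.le
    · exact hchain x hu hv h
  have hkB : j (m s) (m t) ∈ B := hB _ (hm s).1 _ (hm t).1
  have hkst : j (m s) (m t) ≤ j s t :=
    jub _ _ _ ((hm s).2.1.trans (jl s t)) ((hm t).2.1.trans (jr s t))
  have hkw : j (m s) (m t) ≤ m (j s t) := (hm (j s t)).2.2 _ hkB hkst
  have hwB : m (j s t) ∈ B := (hm _).1
  have hwle : m (j s t) ≤ j s t := (hm _).2.1
  refine le_antisymm ?_ hkw
  rcases comp (m s) (m (j s t)) s ((jl (m s) (m t)).trans hkw) (hm s).2.1 with hws | hsw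
  · exact ((hm s).2.2 _ hwB hws).trans (jl _ _)
  rcases comp (m t) (m (j s t)) t ((jr (m s) (m t)).trans hkw) (hm t).2.1 with hwt | htw
  · exact ((hm t).2.2 _ hwB hwt).trans (jr _ _)
  -- now s ≤ w and t ≤ w
  rcases comp (m s) (j (m s) (m t)) s (jl _ _) (hm s).2.1 with hks | hsk
  · -- k ≤ s, so m t ≤ s; chain above m t contains s and t
    have hmts : m t ≤ s := (jr (m s) (m t)).trans hks
    rcases comp (m t) s t hmts (hm t).2.1 with hst | hts
    · exact ((hm t).2.2 _ hwB (hwle.trans (jub s t t hst le_rfl))).trans (jr _ _)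
    · exact ((hm s).2.2 _ hwB (hwle.trans (jub s t s le_rfl hts))).trans (jl _ _)
  · -- s ≤ k; chain above m t contains k and t
    rcases comp (m t) (j (m s) (m t)) t (jr _ _) (hm t).2.1 with hkt | htk
    · -- k ≤ t, so m s ≤ t; chain above m s contains s and t
      have hmst : m s ≤ t := (jl (m s) (m t)).trans hkt
      rcases comp (m s) s t (hm s).2.1 hmst with hst | hts
      · exact ((hm t).2.2 _ hwB (hwle.trans (jub s t t hst le_rfl))).trans (jr _ _)
      · exact ((hm s).2.2 _ hwB (hwle.trans (jub s t s le_rfl hts))).trans (jl _ _)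
    · exact hwle.trans (jub s t _ hsk htk)
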